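/- Let T be an endotree and x its in-order sequence. Then T is a Fishburn tree if and only if x is a modified ascent sequence, i.e., x is a Cayley permutation with asctops(x) = nub(x). Consequently the in-order map restricts to a size-preserving bijection between Fishburn trees and modified ascent sequences. -/

import Mathlib

inductive LTree where
  | nil : LTree
  | node : LTree → ℕ → LTree → LTree
deriving DecidableEq

namespace LTree

def size : LTree → ℕ
  | nil => 0
  | node L _ R => L.size + 1 + R.size

/-- The in-order sequence of labels. -/
def inorder : LTree → List ℕ
  | nil => []
  | node L r R => L.inorder ++ r :: R.inorder

/-- The maximum label (0 for the empty tree). -/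
def maxL : LTree → ℕ
  | nil => 0
  | node L r R => max r (max L.maxL R.maxL)

/-- Weakly decreasing along every root-to-leaf path. -/
def Decreasing : LTree → Prop
  | nil => True
  | node L r R => L.maxL ≤ r ∧ R.maxL ≤ r ∧ L.Decreasing ∧ R.Decreasing

/-- Strictly decreasing to the left: every label in a left subtree
is strictly smaller than the label of its parent. -/
def StrictLeft : LTree → Prop
  | nil => True
  | node L r R => L.maxL < r ∧ L.StrictLeft ∧ R.StrictLeft

/-- An endotree: decreasing, strictly decreasing to the left, labels in `[n]`. -/
def IsEndotree (T : LTree) : Prop :=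
  T.Decreasing ∧ T.StrictLeft ∧ ∀ l ∈ T.inorder, 1 ≤ l ∧ l ≤ T.size

/-- A regular endotree: the set of labels equals `[k]` for some `k ≤ n`. -/
def IsRegularEndotree (T : LTree) : Prop :=
  T.IsEndotree ∧ ∃ k ≤ T.size, ∀ l, l ∈ T.inorder ↔ (1 ≤ l ∧ l ≤ k)

end LTree

/-- An endofunction on `[n]`, identified with a word of length `n` over `[n]`. -/
def IsEndofun (x : List ℕ) : Prop := ∀ a ∈ x, 1 ≤ a ∧ a ≤ x.length

/-- A Cayley permutation: an endofunction whose image is `[k]` for some `k ≤ n`. -/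
def IsCayley (x : List ℕ) : Prop :=
  IsEndofun x ∧ ∃ k ≤ x.length, ∀ j, j ∈ x ↔ (1 ≤ j ∧ j ≤ k)

namespace LTree

/-- The list of (subtrees rooted at the) nodes of `T`, in in-order. -/
def nodes : LTree → List LTree
  | nil => []
  | node L r R => L.nodes ++ node L r R :: R.nodes

/-- Root label (0 for the empty tree). -/
def rootLabel : LTree → ℕ
  | nil => 0
  | node _ r _ => r

/-- Left subtree. -/
def leftT : LTree → LTree
  | nil => nil
  | node L _ _ => L

/-- Indices `i` (0-based) such that the `i`-th in-order node `v_{i+1}` is in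
`treetops(T)`: either the first node or a node with nonempty left subtree. -/
def treetopsIdx (T : LTree) : Set ℕ :=
  {i | i < T.size ∧ (i = 0 ∨ (T.nodes.getD i nil).leftT ≠ nil)}

/-- Indices `i` such that the label of the `i`-th in-order node does not occur
at any earlier in-order node. -/
def unseenIdx (T : LTree) : Set ℕ :=
  {i | i < T.size ∧
    ∀ j < i, (T.nodes.getD j nil).rootLabel ≠ (T.nodes.getD i nil).rootLabel}

/-- A Fishburn tree: a regular endotree with `treetops(T) = unseen(T)`. -/
def IsFishburnTree (T : LTree) : Prop :=
  T.IsRegularEndotree ∧ treetopsIdx T = unseenIdx T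

end LTree

/-- The set of first occurrences of `x` together with their (0-based) indices. -/
def nubPairs (x : List ℕ) : Set (ℕ × ℕ) :=
  {q | q.1 < x.length ∧ q.2 = x.getD q.1 0 ∧ ∀ j < q.1, x.getD j 0 ≠ x.getD q.1 0}

/-- The set of ascent tops of `x` (including the first entry) together with
their (0-based) indices. -/
def asctopsPairs (x : List ℕ) : Set (ℕ × ℕ) :=
  {q | q.1 < x.length ∧ q.2 = x.getD q.1 0 ∧
    (q.1 = 0 ∨ x.getD (q.1 - 1) 0 < x.getD q.1 0)}

/-- A modified ascent sequence: a Cayley permutation with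
`asctops(x) = nub(x)`. -/
def IsModAsc (x : List ℕ) : Prop :=
  IsCayley x ∧ asctopsPairs x = nubPairs x

namespace LTree

lemma length_inorder (T : LTree) : T.inorder.length = T.size := by
  induction T with
  | nil => rfl
  | node L r R ihL ihR => simp [inorder, size, ihL, ihR]; omega

lemma length_nodes (T : LTree) : T.nodes.length = T.size := by
  induction T with
  | nil => rfl
  | node L r R ihL ihR => simp [nodes, size, ihL, ihR]; omega

lemma inorder_eq_map (T : LTree) : T.inorder = T.nodes.map rootLabel := by
  induction T with
  | nil => rfl
  | node L r R ihL ihR => simp [inorder, nodes, ihL, ihR, rootLabel]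

lemma mem_inorder_le_maxL {T : LTree} {a : ℕ} (h : a ∈ T.inorder) : a ≤ T.maxL := by
  induction T with
  | nil => simp [inorder] at h
  | node L r R ihL ihR =>
    simp [inorder] at h
    rcases h with h | h | h
    · exact le_trans (ihL h) (by simp [maxL])
    · simp [maxL, h]
    · exact le_trans (ihR h) (by simp [maxL])

lemma maxL_eq_foldr (T : LTree) : T.maxL = T.inorder.foldr max 0 := by
  induction T with
  | nil => rfl
  | node L r R ihL ihR =>
    simp [maxL, inorder, List.foldr_append, ihL, ihR]
    induction L.inorder with
    | nil => simp [Nat.max_comm]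
    | cons a t ih => simp [List.foldr_cons, ih]; omega

lemma foldr_max_le_iff {l : List ℕ} {m : ℕ} : l.foldr max 0 ≤ m ↔ ∀ a ∈ l, a ≤ m := by
  induction l with
  | nil => simp
  | cons a t ih => simp [ih]

lemma foldr_max_lt_iff {l : List ℕ} {m : ℕ} :
    l.foldr max 0 < m ↔ 0 < m ∧ ∀ a ∈ l, a < m := by
  induction l with
  | nil => simp
  | cons a t ih => simp [Nat.max_lt, ih]; tauto

lemma foldr_max_mem {l : List ℕ} (h : l ≠ []) : l.foldr max 0 ∈ l := by
  induction l with
  | nil => exact absurd rfl h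
  | cons a t ih =>
    rcases eq_or_ne t [] with rfl | ht
    · simp
    · rcases le_or_gt (t.foldr max 0) a with h' | h'
      · simp [max_eq_left h']
      · have := ih ht
        simp [max_eq_right h'.le, this]

lemma size_pos_iff {T : LTree} : 0 < T.size ↔ T ≠ nil := by
  cases T <;> simp [size]

lemma firstNode_leftT {T : LTree} (h : T ≠ nil) : (T.nodes.getD 0 nil).leftT = nil := by
  induction T with
  | nil => exact absurd rfl h
  | node L r R ihL ihR =>
    rcases eq_or_ne L nil with rfl | hL
    · simp [nodes, leftT]
    · have hlen : 0 < L.nodes.length := by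
        rw [length_nodes]; exact size_pos_iff.mpr hL
      rw [nodes, List.getD_append _ _ _ _ hlen]
      exact ihL hL

lemma leftT_nodes {T : LTree} (hD : T.Decreasing) (hS : T.StrictLeft) :
    ∀ i, 0 < i → i < T.size →
    ((T.nodes.getD i nil).leftT ≠ nil ↔ T.inorder.getD (i-1) 0 < T.inorder.getD i 0) := by
  induction T with
  | nil => intro i h0 hi; simp [size] at hi
  | node L r R ihL ihR =>
    intro i h0 hi
    obtain ⟨hLr, hRr, hLD, hRD⟩ := hD
    obtain ⟨hLs, hLS, hRS⟩ := hS
    have hnL : L.nodes.length = L.size := length_nodes L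
    have hiL : L.inorder.length = L.size := length_inorder L
    rcases lt_trichotomy i L.size with h | h | h
    · rw [nodes, inorder, List.getD_append _ _ _ _ (by omega),
        List.getD_append _ _ _ _ (by omega), List.getD_append _ _ _ _ (by omega)]
      exact ihL hLD hLS i h0 h
    · -- i = L.size : the root node
      have hLne : L ≠ nil := by rw [← size_pos_iff]; omega
      have gnode : ((L.node r R).nodes.getD i nil) = L.node r R := by
        rw [nodes, List.getD_append_right _ _ _ _ (by omega)]
        have : i - L.nodes.length = 0 := by omega
        rw [this]; simp
      have gcur : (L.node r R).inorder.getD i 0 = r := by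
        rw [inorder, List.getD_append_right _ _ _ _ (by omega)]
        have : i - L.inorder.length = 0 := by omega
        rw [this]; simp
      have gprev : (L.node r R).inorder.getD (i-1) 0 = L.inorder.getD (i-1) 0 := by
        rw [inorder, List.getD_append _ _ _ _ (by omega)]
      rw [gnode, gcur, gprev]
      have hmem : L.inorder.getD (i-1) 0 ∈ L.inorder := by
        rw [List.getD_eq_getElem _ _ (by omega)]; exact List.getElem_mem _
      have hlt : L.inorder.getD (i-1) 0 < r := lt_of_le_of_lt (mem_inorder_le_maxL hmem) hLs
      simpa [leftT, hLne] using hlt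
    · -- i > L.size : in the right subtree
      have hRsize : R.nodes.length = R.size := length_nodes R
      have hRi : R.inorder.length = R.size := length_inorder R
      have hsz : (node L r R).size = L.size + 1 + R.size := rfl
      set j := i - L.size - 1 with hj
      have hjR : j < R.size := by rw [hsz] at hi; omega
      have gnode : ((L.node r R).nodes.getD i nil) = R.nodes.getD j nil := by
        rw [nodes, List.getD_append_right _ _ _ _ (by omega)]
        have : i - L.nodes.length = j + 1 := by omega
        rw [this]; simp
      have gcur : (L.node r R).inorder.getD i 0 = R.inorder.getD j 0 := by
        rw [inorder, List.getD_append_right _ _ _ _ (by omega)]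
        have : i - L.inorder.length = j + 1 := by omega
        rw [this]; simp
      rw [gnode, gcur]
      rcases Nat.eq_zero_or_pos j with hj0 | hjpos
      · -- previous element is r, current node is the leftmost node of R
        have hRne : R ≠ nil := by rw [← size_pos_iff]; omega
        have gprev : (L.node r R).inorder.getD (i-1) 0 = r := by
          rw [inorder, List.getD_append_right _ _ _ _ (by omega)]
          have : i - 1 - L.inorder.length = 0 := by omega
          rw [this]; simp
        rw [gprev, hj0, firstNode_leftT hRne]
        have hmem : R.inorder.getD 0 0 ∈ R.inorder := by
          rw [List.getD_eq_getElem _ _ (by omega)]; exact List.getElem_mem _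
        have : R.inorder.getD 0 0 ≤ r := le_trans (mem_inorder_le_maxL hmem) hRr
        simp only [ne_eq, not_true_eq_false, false_iff, Nat.not_lt]
        exact this
      · have gprev : (L.node r R).inorder.getD (i-1) 0 = R.inorder.getD (j-1) 0 := by
          rw [inorder, List.getD_append_right _ _ _ _ (by omega)]
          have : i - 1 - L.inorder.length = (j - 1) + 1 := by omega
          rw [this]; simp
        rw [gprev]
        exact ihR hRD hRS j hjpos hjR

lemma rootLabel_nodes {T : LTree} {i : ℕ} (hi : i < T.size) :
    (T.nodes.getD i nil).rootLabel = T.inorder.getD i 0 := by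
  rw [inorder_eq_map, List.getD_eq_getElem _ _ (by simp [length_nodes]; omega),
    List.getD_eq_getElem _ _ (by simp [length_nodes]; omega)]
  simp

def build : List ℕ → LTree
  | [] => nil
  | a :: t =>
    node (build ((a :: t).take ((a :: t).idxOf ((a :: t).foldr max 0))))
      ((a :: t).foldr max 0)
      (build ((a :: t).drop ((a :: t).idxOf ((a :: t).foldr max 0) + 1)))
termination_by x => x.length
decreasing_by
  · have hm : (a :: t).foldr max 0 ∈ a :: t := foldr_max_mem (by simp)
    have := List.idxOf_lt_length_iff.mpr hm
    simp only [List.length_take]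
    omega
  · simp only [List.length_drop, List.length_cons]
    omega

lemma build_cons {x : List ℕ} (h : x ≠ []) :
    build x = node (build (x.take (x.idxOf (x.foldr max 0))))
      (x.foldr max 0) (build (x.drop (x.idxOf (x.foldr max 0) + 1))) := by
  cases x with
  | nil => exact absurd rfl h
  | cons a t => rw [build]

lemma build_nil : build [] = nil := by rw [build]

lemma build_inorder (x : List ℕ) : (build x).inorder = x := by
  have H : ∀ n (x : List ℕ), x.length ≤ n → (build x).inorder = x := by
    intro n
    induction n with
    | zero =>
      intro x h
      have : x = [] := by
        cases x with
        | nil => rfl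
        | cons a t => simp at h
      subst this; rw [build_nil]; rfl
    | succ n ih =>
      intro x h
      rcases eq_or_ne x [] with rfl | hx
      · rw [build_nil]; rfl
      · have hm : x.foldr max 0 ∈ x := foldr_max_mem hx
        have hidx : x.idxOf (x.foldr max 0) < x.length := List.idxOf_lt_length_iff.mpr hm
        rw [build_cons hx, inorder,
          ih _ (by simp [List.length_take]; omega),
          ih _ (by simp [List.length_drop]; omega)]
        have h2 := List.getElem_cons_drop hidx
        rw [List.getElem_idxOf hidx] at h2
        rw [h2]
        have h3 : x.idxOf (x.foldr max 0) ≤ x.length := hidx.le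
        rw [List.take_append_drop]
  exact H x.length x le_rfl

lemma size_build (x : List ℕ) : (build x).size = x.length := by
  rw [← length_inorder, build_inorder]

lemma maxL_build (x : List ℕ) : (build x).maxL = x.foldr max 0 := by
  rw [maxL_eq_foldr, build_inorder]

lemma not_mem_take_idxOf {α : Type*} [DecidableEq α] (a : α) (l : List α) :
    a ∉ l.take (l.idxOf a) := by
  induction l with
  | nil => simp
  | cons b t ih =>
    rcases eq_or_ne b a with rfl | hba
    · simp [List.idxOf_cons_self]
    · rw [List.idxOf_cons_ne _ (by simpa using hba)]
      simp [hba, Ne.symm hba, ih]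

lemma build_decreasing (x : List ℕ) : (build x).Decreasing := by
  have H : ∀ n (x : List ℕ), x.length ≤ n → (build x).Decreasing := by
    intro n
    induction n with
    | zero =>
      intro x h
      have : x = [] := by cases x with | nil => rfl | cons a t => simp at h
      subst this; rw [build_nil]; trivial
    | succ n ih =>
      intro x h
      rcases eq_or_ne x [] with rfl | hx
      · rw [build_nil]; trivial
      · have hm : x.foldr max 0 ∈ x := foldr_max_mem hx
        have hidx : x.idxOf (x.foldr max 0) < x.length := List.idxOf_lt_length_iff.mpr hm
        rw [build_cons hx]
        refine ⟨?_, ?_, ih _ (by simp [List.length_take]; omega),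
          ih _ (by simp [List.length_drop]; omega)⟩
        · rw [maxL_build, foldr_max_le_iff]
          intro a ha
          exact foldr_max_le_iff.mp le_rfl a (List.mem_of_mem_take ha)
        · rw [maxL_build, foldr_max_le_iff]
          intro a ha
          exact foldr_max_le_iff.mp le_rfl a (List.mem_of_mem_drop ha)
  exact H x.length x le_rfl

lemma build_strictLeft (x : List ℕ) (hpos : ∀ a ∈ x, 1 ≤ a) : (build x).StrictLeft := by
  have H : ∀ n (x : List ℕ), x.length ≤ n → (∀ a ∈ x, 1 ≤ a) → (build x).StrictLeft := by
    intro n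
    induction n with
    | zero =>
      intro x h _
      have : x = [] := by cases x with | nil => rfl | cons a t => simp at h
      subst this; rw [build_nil]; trivial
    | succ n ih =>
      intro x h hpos
      rcases eq_or_ne x [] with rfl | hx
      · rw [build_nil]; trivial
      · have hm : x.foldr max 0 ∈ x := foldr_max_mem hx
        have hidx : x.idxOf (x.foldr max 0) < x.length := List.idxOf_lt_length_iff.mpr hm
        rw [build_cons hx]
        refine ⟨?_, ih _ (by simp [List.length_take]; omega)
            (fun a ha => hpos a (List.mem_of_mem_take ha)),
          ih _ (by simp [List.length_drop]; omega)
            (fun a ha => hpos a (List.mem_of_mem_drop ha))⟩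
        rw [maxL_build, foldr_max_lt_iff]
        refine ⟨lt_of_lt_of_le (by norm_num) (hpos _ hm), ?_⟩
        intro a ha
        have h1 : a ≤ x.foldr max 0 := foldr_max_le_iff.mp le_rfl a (List.mem_of_mem_take ha)
        have h2 : a ≠ x.foldr max 0 := by
          intro hcon
          exact not_mem_take_idxOf (x.foldr max 0) x (hcon ▸ ha)
        omega
  exact H x.length x le_rfl hpos

lemma build_eq {T : LTree} (hD : T.Decreasing) (hS : T.StrictLeft)
    (hpos : ∀ a ∈ T.inorder, 1 ≤ a) : build T.inorder = T := by
  induction T with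
  | nil => exact build_nil
  | node L r R ihL ihR =>
    obtain ⟨hLr, hRr, hLD, hRD⟩ := hD
    obtain ⟨hLs, hLS, hRS⟩ := hS
    have hposL : ∀ a ∈ L.inorder, 1 ≤ a := fun a ha => hpos a (by simp [inorder, ha])
    have hposR : ∀ a ∈ R.inorder, 1 ≤ a := fun a ha => hpos a (by simp [inorder, ha])
    have hx : (L.node r R).inorder ≠ [] := by simp [inorder]
    have hmax : (L.node r R).inorder.foldr max 0 = r := by
      rw [← maxL_eq_foldr, maxL]
      have := maxL_eq_foldr L
      have := maxL_eq_foldr R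
      omega
    have hrL : r ∉ L.inorder := by
      intro hcon
      exact absurd (mem_inorder_le_maxL hcon) (by omega)
    have hidx : (L.node r R).inorder.idxOf r = L.inorder.length := by
      rw [inorder, List.idxOf_append_of_notMem (by simpa using hrL)]
      simp
    rw [build_cons hx, hmax, hidx]
    rw [inorder, List.take_left]
    have hdrop : (L.inorder ++ r :: R.inorder).drop (L.inorder.length + 1) =
        (r :: R.inorder).drop 1 := by rw [List.drop_append]; simp
    rw [hdrop]
    simp only [List.drop_succ_cons, List.drop_zero]
    rw [ihL hLD hLS hposL, ihR hRD hRS hposR]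

lemma treetops_char {T : LTree} (hD : T.Decreasing) (hS : T.StrictLeft) :
    treetopsIdx T = {i | i < T.size ∧
      (i = 0 ∨ T.inorder.getD (i-1) 0 < T.inorder.getD i 0)} := by
  ext i
  simp only [treetopsIdx, Set.mem_setOf_eq]
  constructor
  · rintro ⟨hi, h0 | hl⟩
    · exact ⟨hi, Or.inl h0⟩
    · rcases Nat.eq_zero_or_pos i with rfl | hpos
      · exact ⟨hi, Or.inl rfl⟩
      · exact ⟨hi, Or.inr ((leftT_nodes hD hS i hpos hi).mp hl)⟩
  · rintro ⟨hi, h0 | hl⟩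
    · exact ⟨hi, Or.inl h0⟩
    · rcases Nat.eq_zero_or_pos i with rfl | hpos
      · exact ⟨hi, Or.inl rfl⟩
      · exact ⟨hi, Or.inr ((leftT_nodes hD hS i hpos hi).mpr hl)⟩

lemma unseen_char (T : LTree) :
    unseenIdx T = {i | i < T.size ∧
      ∀ j < i, T.inorder.getD j 0 ≠ T.inorder.getD i 0} := by
  ext i
  simp only [unseenIdx, Set.mem_setOf_eq]
  constructor
  · rintro ⟨hi, h⟩
    refine ⟨hi, fun j hj => ?_⟩
    rw [← rootLabel_nodes (lt_trans hj hi), ← rootLabel_nodes hi]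
    exact h j hj
  · rintro ⟨hi, h⟩
    refine ⟨hi, fun j hj => ?_⟩
    rw [rootLabel_nodes (lt_trans hj hi), rootLabel_nodes hi]
    exact h j hj

end LTree

lemma pairs_eq_iff (x : List ℕ) :
    asctopsPairs x = nubPairs x ↔
    {i | i < x.length ∧ (i = 0 ∨ x.getD (i-1) 0 < x.getD i 0)} =
    {i | i < x.length ∧ ∀ j < i, x.getD j 0 ≠ x.getD i 0} := by
  constructor
  · intro h; ext i
    simp only [Set.mem_setOf_eq]
    constructor
    · rintro ⟨hi, hc⟩
      have hm : (i, x.getD i 0) ∈ asctopsPairs x := ⟨hi, rfl, hc⟩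
      rw [h] at hm
      exact ⟨hi, hm.2.2⟩
    · rintro ⟨hi, hc⟩
      have hm : (i, x.getD i 0) ∈ nubPairs x := ⟨hi, rfl, hc⟩
      rw [← h] at hm
      exact ⟨hi, hm.2.2⟩
  · intro h; ext ⟨i, v⟩
    have h' := Set.ext_iff.mp h i
    simp only [Set.mem_setOf_eq] at h'
    simp only [asctopsPairs, nubPairs, Set.mem_setOf_eq]
    constructor
    · rintro ⟨hi, hv, hc⟩
      exact ⟨hi, hv, (h'.mp ⟨hi, hc⟩).2⟩
    · rintro ⟨hi, hv, hc⟩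
      exact ⟨hi, hv, (h'.mpr ⟨hi, hc⟩).2⟩

namespace LTree

lemma sets_iff {T : LTree} (hD : T.Decreasing) (hS : T.StrictLeft) :
    (treetopsIdx T = unseenIdx T ↔ asctopsPairs T.inorder = nubPairs T.inorder) := by
  rw [treetops_char hD hS, unseen_char, pairs_eq_iff, length_inorder]

lemma main_iff (T : LTree) (hT : T.IsEndotree) :
    T.IsFishburnTree ↔ IsModAsc T.inorder := by
  obtain ⟨hD, hS, hb⟩ := hT
  have hx := length_inorder T
  constructor
  · rintro ⟨⟨hT', k, hk, hkk⟩, hsets⟩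
    refine ⟨⟨fun a ha => by rw [hx]; exact hb a ha, k, by omega, hkk⟩,
      (sets_iff hD hS).mp hsets⟩
  · rintro ⟨⟨hend, k, hk, hkk⟩, hpairs⟩
    rw [hx] at hk
    exact ⟨⟨⟨hD, hS, hb⟩, k, hk, hkk⟩, (sets_iff hD hS).mpr hpairs⟩

end LTree

/-- an endotree is a Fishburn tree iff its in-order sequence is a
modified ascent sequence; consequently the in-order map restricts to a
size-preserving bijection between Fishburn trees and modified ascent
sequences. -/
theorem fishburn_iff_modasc :
    (∀ T : LTree, T.IsEndotree → (T.IsFishburnTree ↔ IsModAsc T.inorder)) ∧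
    Set.BijOn LTree.inorder {T : LTree | T.IsFishburnTree}
      {x : List ℕ | IsModAsc x} ∧
    (∀ T : LTree, T.inorder.length = T.size) := by
  refine ⟨LTree.main_iff, ⟨?_, ?_, ?_⟩, LTree.length_inorder⟩
  · -- MapsTo
    intro T hT
    exact (LTree.main_iff T hT.1.1).mp hT
  · -- InjOn
    intro T1 h1 T2 h2 heq
    obtain ⟨hD1, hS1, hb1⟩ := h1.1.1
    obtain ⟨hD2, hS2, hb2⟩ := h2.1.1
    rw [← LTree.build_eq hD1 hS1 (fun a ha => (hb1 a ha).1),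
      ← LTree.build_eq hD2 hS2 (fun a ha => (hb2 a ha).1), heq]
  · -- SurjOn
    intro x hx
    obtain ⟨⟨hend, k, hk, hkk⟩, hpairs⟩ := hx
    have hpos : ∀ a ∈ x, 1 ≤ a := fun a ha => (hend a ha).1
    have hio := LTree.build_inorder x
    have hT : (LTree.build x).IsEndotree := by
      refine ⟨LTree.build_decreasing x, LTree.build_strictLeft x hpos, ?_⟩
      intro l hl
      rw [hio] at hl
      rw [LTree.size_build]
      exact hend l hl
    refine ⟨LTree.build x, ?_, hio⟩
    have : IsModAsc (LTree.build x).inorder := by rw [hio]; exact ⟨⟨hend, k, hk, hkk⟩, hpairs⟩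
    exact (LTree.main_iff _ hT).mpr this
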